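/- Let (G, μ) be a σ-finite measure space, T > 0, η > 1, 1 ≤ p₀ < ∞ and 1 ≤ ρ < ∞, and set q := ηp₀ and r := ηρ. There exists a constant C_η > 0, depending only on η, such that for all measurable functions u, v : [0,T] × G → ℝ with ‖u‖_{L^r_t L^q_x} < ∞ and ‖v‖_{L^r_t L^q_x} < ∞, one has ‖ |u|^{η−1}u − |v|^{η−1}v ‖_{L^ρ_t L^{p₀}_x} ≤ C_η ‖u − v‖_{L^r_t L^q_x} ( ‖u‖_{L^r_t L^q_x} + ‖v‖_{L^r_t L^q_x} )^{η−1}. -/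

import Mathlib

open MeasureTheory Set
open scoped ENNReal

/-- Mixed space–time norm `‖u‖_{L^r_t L^a_x} = (∫₀ᵀ ‖u(t,·)‖_{L^a(G)}^r dt)^{1/r}`
(as an extended nonnegative real). -/
noncomputable def mixedNorm {G : Type*} [MeasurableSpace G] (μ : Measure G)
    (T a r : ℝ) (u : ℝ → G → ℝ) : ENNReal :=
  (∫⁻ t in Ioc (0:ℝ) T, (eLpNorm (u t) (ENNReal.ofReal a) μ) ^ r) ^ (1 / r)

/-!
Pointwise, `F(x) = |x|^(η-1) x` satisfies the mean-value bound
`|F x - F y| ≤ η (|x| + |y|)^(η-1) |x - y|`: for `x, y` of the same sign this is the tangent-line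
inequality for the convex function `s ↦ s^η` (Bernoulli), and for opposite signs
`|F x - F y| = |x|^η + |y|^η ≤ (|x| + |y|)^(η-1) |x - y|`.
Hölder's inequality with exponents `η` and `η/(η-1)`, applied first in space and then in time,
bounds the `L^ρ_t L^{p₀}_x` norm of `|u - v| (|u| + |v|)^(η-1)` by the product of the
`L^{ηρ}_t L^{ηp₀}_x` norm of `u - v` and the `(η-1)`-th power of that of `|u| + |v|`, and
Minkowski's inequality in both variables finishes the proof with `C_η = η`.
All norms are taken of `ℝ≥0∞`-valued functions, where Hölder and Minkowski need no integrability.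
-/

section PowerNonlinearity

variable {η : ℝ}

theorem rpow_sub_rpow_le_mul_rpow_sub_one_mul_sub (hη : 1 ≤ η) {a b : ℝ} (hb : 0 ≤ b)
    (hba : b ≤ a) : a ^ η - b ^ η ≤ η * a ^ (η - 1) * (a - b) := by
  rcases (hb.trans hba).eq_or_lt with rfl | ha
  · obtain rfl : b = 0 := le_antisymm hba hb
    simp
  have bernoulli := one_add_mul_self_le_rpow_one_add
    (show -1 ≤ b / a - 1 by linarith [div_nonneg hb ha.le]) hη
  rw [add_sub_cancel, Real.div_rpow hb ha.le, le_div_iff₀ (by positivity)] at bernoulli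
  have ha_rpow : a ^ η = a ^ (η - 1) * a := by
    rw [← Real.rpow_add_one ha.ne', sub_add_cancel]
  have expand : (1 + η * (b / a - 1)) * (a ^ (η - 1) * a) =
      a ^ (η - 1) * a - η * a ^ (η - 1) * (a - b) := by
    field_simp
    ring
  rw [ha_rpow] at bernoulli ⊢
  linarith

theorem abs_rpow_sub_one_mul_self_of_nonneg (hη : η ≠ 0) {x : ℝ} (hx : 0 ≤ x) :
    |x| ^ (η - 1) * x = x ^ η := by
  rw [abs_of_nonneg hx, ← Real.rpow_add_one' hx (by simpa using hη), sub_add_cancel]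

theorem abs_rpow_sub_one_mul_self_neg (x : ℝ) :
    |-x| ^ (η - 1) * -x = -(|x| ^ (η - 1) * x) := by
  rw [abs_neg, mul_neg]

theorem monotone_abs_rpow_sub_one_mul_self (hη : 0 < η) :
    Monotone fun x : ℝ => |x| ^ (η - 1) * x := by
  have mono_nonneg : ∀ ⦃x y : ℝ⦄, 0 ≤ x → x ≤ y → |x| ^ (η - 1) * x ≤ |y| ^ (η - 1) * y := by
    intro x y hx hxy
    rw [abs_rpow_sub_one_mul_self_of_nonneg hη.ne' hx,
      abs_rpow_sub_one_mul_self_of_nonneg hη.ne' (hx.trans hxy)]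
    exact Real.rpow_le_rpow hx hxy hη.le
  intro x y hxy
  rcases le_total 0 x with hx | hx
  · exact mono_nonneg hx hxy
  rcases le_total y 0 with hy | hy
  · have := mono_nonneg (neg_nonneg.2 hy) (neg_le_neg hxy)
    rwa [abs_rpow_sub_one_mul_self_neg, abs_rpow_sub_one_mul_self_neg, neg_le_neg_iff] at this
  · exact (mul_nonpos_of_nonneg_of_nonpos (by positivity) hx).trans (by positivity)

theorem abs_rpow_sub_one_mul_self_sub_le_of_nonneg (hη : 1 ≤ η) {x y : ℝ} (hy : 0 ≤ y)
    (hyx : y ≤ x) :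
    |x| ^ (η - 1) * x - |y| ^ (η - 1) * y ≤ η * (|x| + |y|) ^ (η - 1) * (x - y) := by
  have hx := hy.trans hyx
  rw [abs_rpow_sub_one_mul_self_of_nonneg (by positivity) hx,
    abs_rpow_sub_one_mul_self_of_nonneg (by positivity) hy]
  calc x ^ η - y ^ η ≤ η * x ^ (η - 1) * (x - y) :=
        rpow_sub_rpow_le_mul_rpow_sub_one_mul_sub hη hy hyx
    _ ≤ η * (|x| + |y|) ^ (η - 1) * (x - y) := by
        gcongr
        linarith [le_abs_self x, abs_nonneg y]

theorem abs_rpow_sub_one_mul_self_sub_le (hη : 1 ≤ η) {x y : ℝ} (hyx : y ≤ x) :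
    |x| ^ (η - 1) * x - |y| ^ (η - 1) * y ≤ η * (|x| + |y|) ^ (η - 1) * (x - y) := by
  rcases le_total 0 y with hy | hy
  · exact abs_rpow_sub_one_mul_self_sub_le_of_nonneg hη hy hyx
  rcases le_total x 0 with hx | hx
  · have := abs_rpow_sub_one_mul_self_sub_le_of_nonneg hη (neg_nonneg.2 hx) (neg_le_neg hyx)
    rw [abs_rpow_sub_one_mul_self_neg, abs_rpow_sub_one_mul_self_neg, abs_neg, abs_neg,
      add_comm |y|] at this
    linarith
  -- `y ≤ 0 ≤ x`: both `|x|` and `|y|` are at most `|x| + |y| = x - y`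
  have hsum : |x| + |y| = x - y := by rw [abs_of_nonneg hx, abs_of_nonpos hy]; ring
  calc |x| ^ (η - 1) * x - |y| ^ (η - 1) * y
      = |x| ^ (η - 1) * |x| + |y| ^ (η - 1) * |y| := by
        rw [abs_of_nonneg hx, abs_of_nonpos hy]; ring
    _ ≤ (|x| + |y|) ^ (η - 1) * |x| + (|x| + |y|) ^ (η - 1) * |y| := by
        gcongr <;> linarith [abs_nonneg x, abs_nonneg y]
    _ = 1 * (|x| + |y|) ^ (η - 1) * (x - y) := by rw [← hsum]; ring
    _ ≤ η * (|x| + |y|) ^ (η - 1) * (x - y) := by gcongr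

theorem abs_abs_rpow_sub_one_mul_self_sub_le (hη : 1 ≤ η) (x y : ℝ) :
    |(|x| ^ (η - 1) * x - |y| ^ (η - 1) * y)| ≤ η * (|x| + |y|) ^ (η - 1) * |x - y| := by
  wlog hyx : y ≤ x generalizing x y
  · simpa only [abs_sub_comm, add_comm |y|] using this y x (le_of_not_ge hyx)
  have hmono := monotone_abs_rpow_sub_one_mul_self (η := η) (by linarith) hyx
  rw [abs_of_nonneg (sub_nonneg.2 hmono), abs_of_nonneg (sub_nonneg.2 hyx)]
  exact abs_rpow_sub_one_mul_self_sub_le hη hyx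

theorem enorm_abs_rpow_sub_one_mul_self_sub_le (hη : 1 ≤ η) (x y : ℝ) :
    ‖|x| ^ (η - 1) * x - |y| ^ (η - 1) * y‖ₑ ≤
      ENNReal.ofReal η * (‖x - y‖ₑ * (‖x‖ₑ + ‖y‖ₑ) ^ (η - 1)) := by
  simp only [Real.enorm_eq_ofReal_abs]
  rw [← ENNReal.ofReal_add (abs_nonneg x) (abs_nonneg y),
    ENNReal.ofReal_rpow_of_nonneg (by positivity) (by linarith),
    ← ENNReal.ofReal_mul (abs_nonneg _), ← ENNReal.ofReal_mul (by linarith)]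
  refine ENNReal.ofReal_le_ofReal ((abs_abs_rpow_sub_one_mul_self_sub_le hη x y).trans_eq ?_)
  ring

end PowerNonlinearity

namespace MeasureTheory

variable {α β : Type*} [MeasurableSpace α] [MeasurableSpace β] (ν : Measure α) (μ : Measure β)

noncomputable def mixedLpNorm (q r : ℝ) (F : α → β → ℝ≥0∞) : ℝ≥0∞ :=
  (∫⁻ t, ((∫⁻ x, F t x ^ q ∂μ) ^ (1 / q)) ^ r ∂ν) ^ (1 / r)

variable {ν μ}

theorem mixedNorm_eq_mixedLpNorm {T a : ℝ} (ha : 0 < a) (r : ℝ) (u : ℝ → β → ℝ) :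
    mixedNorm μ T a r u =
      mixedLpNorm (volume.restrict (Ioc 0 T)) μ a r fun t x => ‖u t x‖ₑ := by
  simp only [mixedNorm, mixedLpNorm, eLpNorm_eq_lintegral_rpow_enorm_toReal
    (ENNReal.ofReal_pos.2 ha).ne' ENNReal.ofReal_ne_top, ENNReal.toReal_ofReal ha.le]

theorem mixedLpNorm_mono {q r : ℝ} (hq : 0 ≤ q) (hr : 0 ≤ r) {F G : α → β → ℝ≥0∞}
    (h : ∀ t x, F t x ≤ G t x) : mixedLpNorm ν μ q r F ≤ mixedLpNorm ν μ q r G := by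
  unfold mixedLpNorm
  gcongr with t x
  exact h t x

theorem mixedLpNorm_const_mul {q r : ℝ} (hq : 0 < q) (hr : 0 < r) {c : ℝ≥0∞} (hc : c ≠ ∞)
    (F : α → β → ℝ≥0∞) :
    mixedLpNorm ν μ q r (fun t x => c * F t x) = c * mixedLpNorm ν μ q r F := by
  have hpow (s : ℝ) (hs : 0 < s) : (c ^ s) ^ (1 / s) = c := by
    rw [← ENNReal.rpow_mul, mul_one_div_cancel hs.ne', ENNReal.rpow_one]
  simp only [mixedLpNorm, ENNReal.mul_rpow_of_nonneg _ _ hq.le,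
    lintegral_const_mul' _ _ (ENNReal.rpow_ne_top_of_nonneg hq.le hc),
    ENNReal.mul_rpow_of_nonneg _ _ (one_div_nonneg.2 hq.le), hpow q hq,
    ENNReal.mul_rpow_of_nonneg _ _ hr.le,
    lintegral_const_mul' _ _ (ENNReal.rpow_ne_top_of_nonneg hr.le hc),
    ENNReal.mul_rpow_of_nonneg _ _ (one_div_nonneg.2 hr.le), hpow r hr]

theorem mixedLpNorm_rpow {c : ℝ} (hc : c ≠ 0) (q r : ℝ) (F : α → β → ℝ≥0∞) :
    mixedLpNorm ν μ q r (fun t x => F t x ^ c) = mixedLpNorm ν μ (q * c) (r * c) F ^ c := by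
  have hexp (s : ℝ) : 1 / s = 1 / (s * c) * c := by
    rw [one_div_mul_eq_div, mul_comm s, ← div_div, div_self hc]
  have hinner (t : α) : ((∫⁻ x, (F t x ^ c) ^ q ∂μ) ^ (1 / q)) ^ r =
      ((∫⁻ x, F t x ^ (q * c) ∂μ) ^ (1 / (q * c))) ^ (r * c) := by
    simp only [← ENNReal.rpow_mul, mul_comm c q, hexp q]
    ring_nf
  simp only [mixedLpNorm, hinner]
  rw [← ENNReal.rpow_mul, ← hexp]

variable [SFinite μ]

theorem measurable_lintegral_rpow_rpow {F : α → β → ℝ≥0∞} (hF : Measurable (Function.uncurry F))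
    (q : ℝ) : Measurable fun t => (∫⁻ x, F t x ^ q ∂μ) ^ (1 / q) :=
  ((hF.pow_const q).lintegral_prod_right').pow_const _

theorem mixedLpNorm_add_le {q r : ℝ} (hq : 1 ≤ q) (hr : 1 ≤ r) {F G : α → β → ℝ≥0∞}
    (hF : Measurable (Function.uncurry F)) (hG : Measurable (Function.uncurry G)) :
    mixedLpNorm ν μ q r (fun t x => F t x + G t x) ≤
      mixedLpNorm ν μ q r F + mixedLpNorm ν μ q r G := by
  calc mixedLpNorm ν μ q r (fun t x => F t x + G t x)
      ≤ (∫⁻ t, ((∫⁻ x, F t x ^ q ∂μ) ^ (1 / q) + (∫⁻ x, G t x ^ q ∂μ) ^ (1 / q)) ^ r ∂ν)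
          ^ (1 / r) := by
        unfold mixedLpNorm
        gcongr with t
        exact ENNReal.lintegral_Lp_add_le hF.of_uncurry_left.aemeasurable
          hG.of_uncurry_left.aemeasurable hq
    _ ≤ mixedLpNorm ν μ q r F + mixedLpNorm ν μ q r G :=
        ENNReal.lintegral_Lp_add_le (measurable_lintegral_rpow_rpow hF q).aemeasurable
          (measurable_lintegral_rpow_rpow hG q).aemeasurable hr

theorem mixedLpNorm_mul_le {p q s ρ r σ : ℝ} (hp : 0 < p) (hpq : p < q)
    (hpqs : 1 / p = 1 / q + 1 / s) (hρ : 0 < ρ) (hρr : ρ < r) (hρrσ : 1 / ρ = 1 / r + 1 / σ)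
    {F G : α → β → ℝ≥0∞}
    (hF : Measurable (Function.uncurry F)) (hG : Measurable (Function.uncurry G)) :
    mixedLpNorm ν μ p ρ (fun t x => F t x * G t x) ≤
      mixedLpNorm ν μ q r F * mixedLpNorm ν μ s σ G := by
  calc mixedLpNorm ν μ p ρ (fun t x => F t x * G t x)
      ≤ (∫⁻ t, ((∫⁻ x, F t x ^ q ∂μ) ^ (1 / q) * (∫⁻ x, G t x ^ s ∂μ) ^ (1 / s)) ^ ρ ∂ν)
          ^ (1 / ρ) := by
        unfold mixedLpNorm
        gcongr with t
        exact ENNReal.lintegral_Lp_mul_le_Lq_mul_Lr hp hpq hpqs μ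
          hF.of_uncurry_left.aemeasurable hG.of_uncurry_left.aemeasurable
    _ ≤ mixedLpNorm ν μ q r F * mixedLpNorm ν μ s σ G :=
        ENNReal.lintegral_Lp_mul_le_Lq_mul_Lr hρ hρr hρrσ ν
          (measurable_lintegral_rpow_rpow hF q).aemeasurable
          (measurable_lintegral_rpow_rpow hG s).aemeasurable

theorem mixedLpNorm_mul_rpow_sub_one_le {η p ρ : ℝ} (hη : 1 < η) (hp : 0 < p) (hρ : 0 < ρ)
    {F G : α → β → ℝ≥0∞}
    (hF : Measurable (Function.uncurry F)) (hG : Measurable (Function.uncurry G)) :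
    mixedLpNorm ν μ p ρ (fun t x => F t x * G t x ^ (η - 1)) ≤
      mixedLpNorm ν μ (η * p) (η * ρ) F * mixedLpNorm ν μ (η * p) (η * ρ) G ^ (η - 1) := by
  have hη1 : η - 1 ≠ 0 := sub_ne_zero.2 hη.ne'
  have hconj (s : ℝ) (hs : 0 < s) : 1 / s = 1 / (η * s) + 1 / (η * s / (η - 1)) := by
    field_simp
    ring
  calc mixedLpNorm ν μ p ρ (fun t x => F t x * G t x ^ (η - 1))
      ≤ mixedLpNorm ν μ (η * p) (η * ρ) F *
          mixedLpNorm ν μ (η * p / (η - 1)) (η * ρ / (η - 1)) (fun t x => G t x ^ (η - 1)) :=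
        mixedLpNorm_mul_le hp (lt_mul_left hp hη) (hconj p hp) hρ (lt_mul_left hρ hη) (hconj ρ hρ)
          hF (hG.pow_const _)
    _ = mixedLpNorm ν μ (η * p) (η * ρ) F * mixedLpNorm ν μ (η * p) (η * ρ) G ^ (η - 1) := by
        rw [mixedLpNorm_rpow hη1, div_mul_cancel₀ _ hη1, div_mul_cancel₀ _ hη1]

end MeasureTheory

theorem stmt7.{u_1} (η : ℝ) (hη : 1 < η) :
    ∃ C > (0:ℝ), ∀ (G : Type u_1) (mG : MeasurableSpace G) (μ : Measure G), SigmaFinite μ →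
      ∀ T p₀ ρ : ℝ, 0 < T → 1 ≤ p₀ → 1 ≤ ρ →
      ∀ u v : ℝ → G → ℝ,
      Measurable (Function.uncurry u) → Measurable (Function.uncurry v) →
      mixedNorm μ T (η * p₀) (η * ρ) u < ⊤ →
      mixedNorm μ T (η * p₀) (η * ρ) v < ⊤ →
      mixedNorm μ T p₀ ρ
          (fun t x => |u t x| ^ (η - 1) * u t x - |v t x| ^ (η - 1) * v t x)
        ≤ ENNReal.ofReal C * mixedNorm μ T (η * p₀) (η * ρ) (fun t x => u t x - v t x)
            * (mixedNorm μ T (η * p₀) (η * ρ) u + mixedNorm μ T (η * p₀) (η * ρ) v)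
              ^ (η - 1) := by
  refine ⟨η, by linarith, fun G _ μ _ T p₀ ρ _ hp₀ hρ u v hu hv _ _ => ?_⟩
  have hp₀η : 1 ≤ η * p₀ := by nlinarith
  have hρη : 1 ≤ η * ρ := by nlinarith
  simp only [mixedNorm_eq_mixedLpNorm (zero_lt_one.trans_le hp₀),
    mixedNorm_eq_mixedLpNorm (zero_lt_one.trans_le hp₀η), mul_assoc]
  set ν := volume.restrict (Ioc (0 : ℝ) T)
  calc mixedLpNorm ν μ p₀ ρ
        (fun t x => ‖|u t x| ^ (η - 1) * u t x - |v t x| ^ (η - 1) * v t x‖ₑ)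
      ≤ mixedLpNorm ν μ p₀ ρ (fun t x =>
          ENNReal.ofReal η * (‖u t x - v t x‖ₑ * (‖u t x‖ₑ + ‖v t x‖ₑ) ^ (η - 1))) :=
        mixedLpNorm_mono (by linarith) (by linarith)
          fun t x => enorm_abs_rpow_sub_one_mul_self_sub_le hη.le (u t x) (v t x)
    _ = ENNReal.ofReal η * mixedLpNorm ν μ p₀ ρ (fun t x =>
          ‖u t x - v t x‖ₑ * (‖u t x‖ₑ + ‖v t x‖ₑ) ^ (η - 1)) :=
        mixedLpNorm_const_mul (by linarith) (by linarith) ENNReal.ofReal_ne_top _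
    _ ≤ ENNReal.ofReal η * (mixedLpNorm ν μ (η * p₀) (η * ρ) (fun t x => ‖u t x - v t x‖ₑ) *
          mixedLpNorm ν μ (η * p₀) (η * ρ) (fun t x => ‖u t x‖ₑ + ‖v t x‖ₑ) ^ (η - 1)) := by
        gcongr
        exact mixedLpNorm_mul_rpow_sub_one_le hη (by linarith) (by linarith) (hu.sub hv).enorm
          (hu.enorm.add hv.enorm)
    _ ≤ _ := by
        gcongr
        exact mixedLpNorm_add_le hp₀η hρη hu.enorm hv.enorm
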